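/- Let C > 0 be fixed. Then (2/(ℓ(ℓ+1))) · ∫_{C/ℓ}^{π/2} (P_ℓ(cos θ) sin θ)² (P_ℓ(cos θ) cos θ − P_ℓ''(cos θ) sin² θ) sin θ dθ = O(1) as ℓ → ∞; that is, there exist K > 0 and ℓ₀ ∈ ℕ such that for all integers ℓ ≥ ℓ₀ the absolute value of this quantity is at most K. -/

import Mathlib

open Real intervalIntegral

/-- The `n`-th Legendre polynomial via Rodrigues' formula:
`P_n(t) = (1/(2^n n!)) dⁿ/dtⁿ (t² − 1)ⁿ`. -/
noncomputable def legendreP (n : ℕ) (t : ℝ) : ℝ :=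
  (1 / ((2 : ℝ) ^ n * (n.factorial : ℝ))) *
    iteratedDeriv n (fun s : ℝ => (s ^ 2 - 1) ^ n) t

/-!
The Legendre polynomial `P = P_ℓ` solves `(1 - t²) P'' - 2t P' + ℓ(ℓ+1) P = 0`, so Sonin's
function `ℓ(ℓ+1) P² + (1 - t²) P'²` has derivative `2t P'²` and on `[-1, 1]` is largest at
`t = ±1`, where it equals `ℓ(ℓ+1)`. Hence `|P| ≤ 1` and `|sin θ · P'(cos θ)| ≤ ℓ(ℓ+1)`.
Eliminating `P''` with the differential equation bounds the integrand by `4 ℓ(ℓ+1)` for every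
`θ`, and the prefactor `2 / (ℓ(ℓ+1))` cancels this growth.
-/

open Polynomial

theorem iteratedDeriv_eval_polynomial {𝕜 : Type*} [NontriviallyNormedField 𝕜] (p : 𝕜[X])
    (n : ℕ) : iteratedDeriv n (fun x => p.eval x) = fun x => (derivative^[n] p).eval x := by
  induction n with
  | zero => rfl
  | succ n ih =>
    ext x
    rw [iteratedDeriv_succ, ih, Function.iterate_succ_apply', Polynomial.deriv]

theorem eval_iterate_derivative_X_sub_C_pow_mul {R : Type*} [CommRing R] (a : R) (n : ℕ)
    (q : R[X]) : (derivative^[n] ((X - C a) ^ n * q)).eval a = n.factorial * q.eval a := by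
  rw [← factorial_smul_hasseDeriv, LinearMap.smul_apply, eval_smul, ← taylor_coeff, taylor_mul,
    taylor_pow]
  simp [coeff_X_pow_mul', taylor_coeff_zero]

theorem X_sq_sub_one_mul_derivative_pow {R : Type*} [CommRing R] (ℓ : ℕ) :
    (X ^ 2 - 1 : R[X]) * derivative ((X ^ 2 - 1) ^ ℓ) =
      C (2 * (ℓ : R)) * X * (X ^ 2 - 1) ^ ℓ := by
  cases ℓ with
  | zero => simp
  | succ ℓ =>
    simp only [derivative_pow, derivative_sub, derivative_X, derivative_one, map_mul,
      map_ofNat, map_natCast, Nat.add_sub_cancel]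
    ring

theorem iterate_derivative_legendre_ode {R : Type*} [CommRing R] {p : R[X]} {c : R}
    (hp : (X ^ 2 - 1) * derivative p = C (2 * c) * X * p) (n : ℕ) :
    (X ^ 2 - 1) * derivative^[n + 2] p + C (2 * (n + 1) - 2 * c) * X * derivative^[n + 1] p =
      C ((n + 1) * (2 * c - n)) * derivative^[n] p := by
  induction n with
  | zero =>
    have h := congrArg derivative hp
    simp only [derivative_mul, derivative_sub, derivative_X_pow, derivative_one, derivative_C,
      derivative_X, Nat.cast_ofNat] at h
    simp only [Function.iterate_succ_apply', Function.iterate_zero_apply, Nat.cast_zero]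
    simp only [map_sub, map_mul, map_add, map_ofNat, map_one, map_zero] at h ⊢
    linear_combination h
  | succ n ih =>
    have h := congrArg derivative ih
    simp only [derivative_mul, derivative_add, derivative_sub, derivative_X_pow, derivative_one,
      derivative_C, derivative_X, ← Function.iterate_succ_apply' derivative] at h
    simp only [map_sub, map_mul, map_add, map_natCast, map_ofNat, map_one, Nat.cast_add,
      Nat.cast_one] at h ⊢
    linear_combination h

noncomputable def legendrePoly (ℓ : ℕ) : ℝ[X] :=
  C (1 / (2 ^ ℓ * ℓ.factorial : ℝ)) * derivative^[ℓ] ((X ^ 2 - 1) ^ ℓ)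

theorem legendreP_eq_eval (ℓ : ℕ) : legendreP ℓ = fun t => (legendrePoly ℓ).eval t := by
  have hR : (fun s : ℝ => (s ^ 2 - 1) ^ ℓ) = fun s => ((X ^ 2 - 1) ^ ℓ : ℝ[X]).eval s := by
    simp
  ext t
  rw [legendreP, hR, iteratedDeriv_eval_polynomial, legendrePoly, eval_C_mul]

theorem legendrePoly_ode (ℓ : ℕ) :
    (X ^ 2 - 1) * derivative (derivative (legendrePoly ℓ)) +
      2 * X * derivative (legendrePoly ℓ) = C ((ℓ : ℝ) * (ℓ + 1)) * legendrePoly ℓ := by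
  have h := iterate_derivative_legendre_ode (X_sq_sub_one_mul_derivative_pow (R := ℝ) ℓ) ℓ
  simp only [legendrePoly, derivative_C_mul, ← Function.iterate_succ_apply' derivative]
  simp only [map_sub, map_mul, map_add, map_natCast, map_ofNat, map_one] at h ⊢
  linear_combination C (1 / (2 ^ ℓ * ℓ.factorial : ℝ)) * h

theorem legendrePoly_eval_one (ℓ : ℕ) : (legendrePoly ℓ).eval 1 = 1 := by
  have hR : (X ^ 2 - 1 : ℝ[X]) ^ ℓ = (X - C 1) ^ ℓ * (X + 1) ^ ℓ := by
    rw [← mul_pow]; simp only [map_one]; ring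
  rw [legendrePoly, eval_C_mul, hR, eval_iterate_derivative_X_sub_C_pow_mul]
  simp only [eval_pow, eval_add, eval_X, eval_one]
  field_simp
  norm_num

theorem legendrePoly_eval_neg_one (ℓ : ℕ) : (legendrePoly ℓ).eval (-1) = (-1) ^ ℓ := by
  have hR : (X ^ 2 - 1 : ℝ[X]) ^ ℓ = (X - C (-1)) ^ ℓ * (X - 1) ^ ℓ := by
    rw [← mul_pow]; simp only [map_neg, map_one]; ring
  rw [legendrePoly, eval_C_mul, hR, eval_iterate_derivative_X_sub_C_pow_mul]
  simp only [eval_pow, eval_sub, eval_X, eval_one]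
  field_simp
  rw [← mul_pow]
  norm_num

noncomputable def soninEnergy (p : ℝ[X]) (k t : ℝ) : ℝ :=
  k * p.eval t ^ 2 + (1 - t ^ 2) * (derivative p).eval t ^ 2

section SoninEnergy

variable {p : ℝ[X]} {k : ℝ}

theorem hasDerivAt_soninEnergy
    (hp : (X ^ 2 - 1) * derivative (derivative p) + 2 * X * derivative p = C k * p) (t : ℝ) :
    HasDerivAt (soninEnergy p k) (2 * t * (derivative p).eval t ^ 2) t := by
  have hode := congrArg (eval t) hp
  simp only [eval_add, eval_mul, eval_sub, eval_pow, eval_X, eval_one, eval_C, eval_ofNat] at hode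
  have h : HasDerivAt (soninEnergy p k) _ t := (((p.hasDerivAt t).pow 2).const_mul k).add
    (((hasDerivAt_pow 2 t).const_sub 1).mul ((derivative p).hasDerivAt t |>.pow 2))
  refine h.congr_deriv ?_
  simp only [Nat.cast_ofNat, Nat.add_one_sub_one, pow_one]
  linear_combination (-2 * (derivative p).eval t) * hode

theorem soninEnergy_le_max
    (hp : (X ^ 2 - 1) * derivative (derivative p) + 2 * X * derivative p = C k * p) {t : ℝ}
    (ht : t ∈ Set.Icc (-1) 1) :
    soninEnergy p k t ≤ max (soninEnergy p k (-1)) (soninEnergy p k 1) := by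
  have hcont : Continuous (soninEnergy p k) := by unfold soninEnergy; fun_prop
  have hderiv (x : ℝ) (s : Set ℝ) :
      HasDerivWithinAt (soninEnergy p k) (2 * x * (derivative p).eval x ^ 2) s x :=
    (hasDerivAt_soninEnergy hp x).hasDerivWithinAt
  rcases le_total 0 t with h0 | h0
  · have hmono : MonotoneOn (soninEnergy p k) (Set.Icc 0 1) :=
      monotoneOn_of_hasDerivWithinAt_nonneg (convex_Icc 0 1) hcont.continuousOn
        (fun x _ => hderiv x _) fun x hx => by
          rw [interior_Icc] at hx
          have := hx.1.le
          positivity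
    exact le_max_of_le_right (hmono ⟨h0, ht.2⟩ ⟨zero_le_one, le_rfl⟩ ht.2)
  · have hanti : AntitoneOn (soninEnergy p k) (Set.Icc (-1) 0) :=
      antitoneOn_of_hasDerivWithinAt_nonpos (convex_Icc (-1) 0) hcont.continuousOn
        (fun x _ => hderiv x _) fun x hx => by
          rw [interior_Icc] at hx
          exact mul_nonpos_of_nonpos_of_nonneg (by linarith [hx.2]) (sq_nonneg _)
    exact le_max_of_le_left (hanti ⟨le_rfl, by norm_num⟩ ⟨ht.1, h0⟩ ht.1)

end SoninEnergy

section LegendreBounds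

variable {ℓ : ℕ} {t : ℝ}

theorem soninEnergy_legendrePoly_le (ht : t ∈ Set.Icc (-1) 1) :
    soninEnergy (legendrePoly ℓ) (ℓ * (ℓ + 1)) t ≤ ℓ * (ℓ + 1) := by
  refine (soninEnergy_le_max (legendrePoly_ode ℓ) ht).trans_eq ?_
  simp [soninEnergy, legendrePoly_eval_one, legendrePoly_eval_neg_one, pow_right_comm _ ℓ 2]

theorem sq_eval_legendrePoly_le_one (hℓ : 0 < ℓ) (ht : t ∈ Set.Icc (-1) 1) :
    (legendrePoly ℓ).eval t ^ 2 ≤ 1 := by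
  have hE := soninEnergy_legendrePoly_le (ℓ := ℓ) ht
  have hN : (0 : ℝ) < ℓ * (ℓ + 1) := by positivity
  have h1t : 0 ≤ 1 - t ^ 2 := by nlinarith [ht.1, ht.2]
  unfold soninEnergy at hE
  nlinarith [mul_nonneg h1t (sq_nonneg ((derivative (legendrePoly ℓ)).eval t))]

theorem one_sub_sq_mul_sq_eval_derivative_legendrePoly_le (ht : t ∈ Set.Icc (-1) 1) :
    (1 - t ^ 2) * (derivative (legendrePoly ℓ)).eval t ^ 2 ≤ ℓ * (ℓ + 1) := by
  have hE := soninEnergy_legendrePoly_le (ℓ := ℓ) ht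
  unfold soninEnergy at hE
  have : (0 : ℝ) ≤ ℓ * (ℓ + 1) * (legendrePoly ℓ).eval t ^ 2 := by positivity
  linarith

end LegendreBounds

theorem abs_legendre_integrand_le {ℓ : ℕ} (hℓ : 0 < ℓ) (θ : ℝ) :
    |(legendreP ℓ (cos θ) * sin θ) ^ 2 *
        (legendreP ℓ (cos θ) * cos θ - deriv (deriv (legendreP ℓ)) (cos θ) * sin θ ^ 2) *
        sin θ| ≤ 4 * (ℓ * (ℓ + 1)) := by
  have hderiv (p : ℝ[X]) : deriv (fun x => p.eval x) = fun x => (derivative p).eval x :=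
    funext fun _ => p.deriv
  rw [legendreP_eq_eval, hderiv, hderiv]
  set N : ℝ := ℓ * (ℓ + 1)
  set t := cos θ
  set s := sin θ
  set Q := (legendrePoly ℓ).eval t
  set A := (derivative (legendrePoly ℓ)).eval t
  set B := (derivative (derivative (legendrePoly ℓ))).eval t
  have hN : 1 ≤ N := by
    have : (1 : ℝ) ≤ ℓ := by exact_mod_cast hℓ
    nlinarith
  have hs2 : s ^ 2 = 1 - t ^ 2 := sin_sq θ
  have htI : t ∈ Set.Icc (-1) 1 := ⟨neg_one_le_cos θ, cos_le_one θ⟩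
  have hB : B * s ^ 2 = 2 * t * A - N * Q := by
    have hode := congrArg (eval t) (legendrePoly_ode ℓ)
    simp only [eval_add, eval_mul, eval_sub, eval_pow, eval_X, eval_one, eval_C,
      eval_ofNat] at hode
    linear_combination (-1 : ℝ) * hode + B * hs2
  have hQs : |Q * s| ≤ 1 := by
    rw [abs_mul]
    exact mul_le_one₀ ((sq_le_one_iff_abs_le_one Q).1 (sq_eval_legendrePoly_le_one hℓ htI))
      (abs_nonneg _) (abs_sin_le_one θ)
  have hsA : |s * A| ≤ N := by
    refine abs_le_of_sq_le_sq ?_ (by linarith)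
    have := one_sub_sq_mul_sq_eval_derivative_legendrePoly_le (ℓ := ℓ) htI
    rw [mul_pow, hs2]
    nlinarith
  have ht : |t| ≤ 1 := abs_cos_le_one θ
  calc _ = |Q * s| ^ 2 * |Q * s * t + N * (Q * s) - 2 * t * (s * A)| := by
        rw [← abs_pow, ← abs_mul]
        congr 1
        linear_combination (-(Q * s) ^ 2 * s) * hB
    _ ≤ 1 ^ 2 * (|Q * s * t| + |N * (Q * s)| + |2 * t * (s * A)|) := by
        gcongr
        exact (abs_sub _ _).trans (by gcongr; exact abs_add_le _ _)
    _ ≤ 1 ^ 2 * (1 + N * 1 + 2 * 1 * N) := by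
        rw [abs_mul _ t, abs_mul N, abs_mul (2 * t), abs_mul 2 t, abs_two,
          abs_of_pos (zero_lt_one.trans_le hN)]
        gcongr
        exact mul_le_one₀ hQs (abs_nonneg _) ht
    _ ≤ 4 * N := by linarith

theorem legendre_sq_second_deriv_integral_bounded_general (C : ℝ) :
    ∃ K > 0, ∃ ℓ₀ : ℕ, ∀ ℓ : ℕ, ℓ₀ ≤ ℓ →
      |(2 / ((ℓ : ℝ) * ((ℓ : ℝ) + 1))) *
        ∫ θ in (C / (ℓ : ℝ))..(π / 2),
          (legendreP ℓ (Real.cos θ) * Real.sin θ) ^ 2 *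
            (legendreP ℓ (Real.cos θ) * Real.cos θ -
              deriv (deriv (legendreP ℓ)) (Real.cos θ) * Real.sin θ ^ 2) *
            Real.sin θ| ≤ K := by
  refine ⟨4 * π + 8 * |C|, by positivity, 1, fun ℓ hℓ => ?_⟩
  have hℓR : (1 : ℝ) ≤ ℓ := by exact_mod_cast hℓ
  have hN : (0 : ℝ) < ℓ * (ℓ + 1) := by nlinarith
  have hlength : |π / 2 - C / ℓ| ≤ π / 2 + |C| := by
    refine (abs_sub _ _).trans (add_le_add (abs_of_pos (by positivity)).le ?_)
    rw [abs_div, Nat.abs_cast]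
    exact div_le_self (abs_nonneg C) hℓR
  have hintegral := norm_integral_le_of_norm_le_const (a := C / ℓ) (b := π / 2) fun θ _ =>
    (norm_eq_abs _).trans_le (abs_legendre_integrand_le hℓ θ)
  rw [norm_eq_abs] at hintegral
  rw [abs_mul, abs_of_pos (div_pos two_pos hN)]
  calc _ ≤ 2 / (ℓ * (ℓ + 1)) * (4 * (ℓ * (ℓ + 1)) * (π / 2 + |C|)) := by
        gcongr
        exact hintegral.trans (by gcongr)
    _ = 4 * π + 8 * |C| := by field_simp; ring

theorem legendre_sq_second_deriv_integral_bounded (C : ℝ) (hC : 0 < C) :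
    ∃ K > 0, ∃ ℓ₀ : ℕ, ∀ ℓ : ℕ, ℓ₀ ≤ ℓ →
      |(2 / ((ℓ : ℝ) * ((ℓ : ℝ) + 1))) *
        ∫ θ in (C / (ℓ : ℝ))..(π / 2),
          (legendreP ℓ (Real.cos θ) * Real.sin θ) ^ 2 *
            (legendreP ℓ (Real.cos θ) * Real.cos θ -
              deriv (deriv (legendreP ℓ)) (Real.cos θ) * Real.sin θ ^ 2) *
            Real.sin θ| ≤ K :=
  legendre_sq_second_deriv_integral_bounded_general C
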